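/- Fix σ > 0 with σ·log(λM²) < 1/10. Then lim_{d→∞} P_{λ,d}( Σ_{m=0}^{⌊σ log d⌋} |V_m| > d^{0.2} ) = 0, where |V_m| denotes the cardinality of V_m. -/

import Mathlib

open MeasureTheory ProbabilityTheory Filter Set

noncomputable section

/-- On the oriented lattice `ℤ₊^d` (vertices `Fin d → ℕ`, oriented edges `x → x + e_j`),
the oriented edge from `x` to `y` is *open* (for the environment `ω`) iff `y = x + e_j` for
some `j` and the infection clock of the edge rings before the recovery clock of `x`.
Here `w x` is the random vertex weight `ρ(x)`, `Y x` is the rate-one exponential recovery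
clock of `x`, and `U x j` is a rate-one exponential clock so that
`U x j / ((λ/d) ρ(x) ρ(x + e_j))` is the exponential infection clock of rate
`(λ/d) ρ(x) ρ(x + e_j)` of the edge `(x, x + e_j)` (infinite when the rate vanishes); thus
the edge is open iff `U x j < (λ/d) ρ(x) ρ(y) Y x`. -/
def openEdge {Ω : Type} (lam : ℝ) (d : ℕ) (w Y : (Fin d → ℕ) → Ω → ℝ)
    (U : (Fin d → ℕ) → Fin d → Ω → ℝ) (ω : Ω) (x y : Fin d → ℕ) : Prop :=
  ∃ j : Fin d, y = Function.update x j (x j + 1) ∧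
    U x j ω < lam / d * (w x ω * w (Function.update x j (x j + 1)) ω) * Y x ω

/-- The sets `V_n` of vertices of `ℤ₊^d` with `ℓ¹`-norm `n` ever infected by the SIR model
started from the origin: `V₀ = {O}` and `V_{n+1}` is the set of endpoints of open oriented
edges starting in `V_n`. -/
def VSet {Ω : Type} (lam : ℝ) (d : ℕ) (w Y : (Fin d → ℕ) → Ω → ℝ)
    (U : (Fin d → ℕ) → Fin d → Ω → ℝ) (ω : Ω) : ℕ → Set (Fin d → ℕ)
  | 0 => {fun _ => 0}
  | n + 1 => {y | ∃ x ∈ VSet lam d w Y U ω n, openEdge lam d w Y U ω x y}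

/-- The random environment on `ℤ₊^d`: i.i.d. vertex weights with law `μ`, i.i.d. rate-one
exponential recovery clocks and i.i.d. rate-one exponential edge clocks, all jointly
independent; `P_{λ,d}` is the (annealed) probability measure `P`. -/
structure LatticeModel {Ω : Type} [MeasurableSpace Ω] (P : Measure Ω)
    (μ : Measure ℝ) (lam : ℝ) (d : ℕ) where
  hprob : IsProbabilityMeasure P
  w : (Fin d → ℕ) → Ω → ℝ
  Y : (Fin d → ℕ) → Ω → ℝ
  U : (Fin d → ℕ) → Fin d → Ω → ℝ
  hw : ∀ x, Measurable (w x)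
  hY : ∀ x, Measurable (Y x)
  hU : ∀ x j, Measurable (U x j)
  hwlaw : ∀ x, P.map (w x) = μ
  hYlaw : ∀ x, P.map (Y x) = expMeasure 1
  hUlaw : ∀ x j, P.map (U x j) = expMeasure 1
  hIndep : iIndepFun
    (m := fun _ : (Fin d → ℕ) ⊕ (Fin d → ℕ) ⊕ (Fin d → ℕ) × Fin d =>
      (inferInstance : MeasurableSpace ℝ))
    (Sum.elim w (Sum.elim Y (fun p => U p.1 p.2))) P

/-!
Almost surely all weights lie in `[0, M]`, and then an open edge `(x, x + e_j)` satisfies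
`U(x, j) < (λM²/d) Y(x)`. Hence every vertex of `V_m` is the endpoint of a direction sequence
`J ∈ [d]^m` along which every step satisfies this domination. The steps of a path start at
distinct vertices, so the `m` events involve disjoint pairs of independent `Exp(1)` clocks and
each has probability at most `λM²/d`; thus `E|V_m| ≤ d^m (λM²/d)^m = (λM²)^m`. Markov's
inequality bounds the probability in question by
`Σ_{m ≤ σ log d} (λM²)^m / d^{0.2} ≤ (σ log d + 1) d^{σ log⁺(λM²) - 0.2} → 0`.
-/

open scoped ENNReal Finset Topology

lemma ProbabilityTheory.iIndepFun.measure_biInter_preimage_pair {Ω ι κ β : Type*}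
    [MeasurableSpace Ω] [MeasurableSpace β] {P : Measure Ω} {f : ι → Ω → β}
    (hf : ∀ i, Measurable (f i)) (h : iIndepFun f P) {a b : κ → ι}
    (hab : Function.Injective (Sum.elim a b)) {s : κ → Set (β × β)}
    (hs : ∀ k, MeasurableSet (s k)) (S : Finset κ) :
    P (⋂ k ∈ S, (fun ω => (f (a k) ω, f (b k) ω)) ⁻¹' s k) =
      ∏ k ∈ S, P ((fun ω => (f (a k) ω, f (b k) ω)) ⁻¹' s k) := by
  classical
  have := h.isProbabilityMeasure
  induction S using Finset.induction_on with
  | empty => simp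
  | insert k S hk ih =>
    rw [Finset.prod_insert hk, ← ih, Finset.set_biInter_insert]
    set T : Finset ι := (S.disjSum S).image (Sum.elim a b)
    have haT : ∀ k' ∈ S, a k' ∈ T := fun k' hk' =>
      Finset.mem_image_of_mem (Sum.elim a b) (Finset.inl_mem_disjSum.mpr hk')
    have hbT : ∀ k' ∈ S, b k' ∈ T := fun k' hk' =>
      Finset.mem_image_of_mem (Sum.elim a b) (Finset.inr_mem_disjSum.mpr hk')
    have hdisj : Disjoint ({a k, b k} : Finset ι) T := by
      simp only [T, Finset.disjoint_insert_left, Finset.disjoint_singleton_left, Finset.mem_image,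
        not_exists, not_and]
      refine ⟨fun x hx hxk => ?_, fun x hx hxk => ?_⟩
      · obtain rfl : x = .inl k := hab hxk
        exact hk (Finset.inl_mem_disjSum.mp hx)
      · obtain rfl : x = .inr k := hab hxk
        exact hk (Finset.inr_mem_disjSum.mp hx)
    have hAB := (h.indepFun_finset _ _ hdisj hf).measure_inter_preimage_eq_mul
      {v | (v ⟨a k, by simp⟩, v ⟨b k, by simp⟩) ∈ s k}
      {v | ∀ k' : S, (v ⟨a k', haT k' k'.2⟩, v ⟨b k', hbT k' k'.2⟩) ∈ s k'}
      ((hs k).preimage (by fun_prop))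
      (by simp only [ofPred_forall]; exact .iInter fun k' => (hs k').preimage (by fun_prop))
    convert hAB using 3 <;> ext <;> simp

lemma expMeasure_Iio_le {r : ℝ} (hr : 0 < r) (t : ℝ) :
    expMeasure r (Iio t) ≤ ENNReal.ofReal (r * t) := by
  have := isProbabilityMeasure_expMeasure hr
  calc expMeasure r (Iio t) ≤ expMeasure r (Iic t) := measure_mono Iio_subset_Iic_self
    _ = ENNReal.ofReal (cdf (expMeasure r) t) := by rw [ofReal_cdf]
    _ ≤ ENNReal.ofReal (r * t) := by
      rw [cdf_expMeasure_eq hr]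
      split_ifs with ht
      · exact ENNReal.ofReal_le_ofReal (by linarith [Real.add_one_le_exp (-(r * t))])
      · simp

lemma lintegral_ofReal_expMeasure {r : ℝ} (hr : 0 < r) :
    ∫⁻ y, ENNReal.ofReal y ∂expMeasure r = ENNReal.ofReal r⁻¹ := by
  have hpdf : ∀ y, exponentialPDF r y * ENNReal.ofReal y =
      (Ioi 0).indicator
        (fun y => ENNReal.ofReal (r * (y ^ ((2 : ℝ) - 1) * Real.exp (-(r * y))))) y := by
    intro y
    rcases lt_or_ge 0 y with hy | hy
    · rw [indicator_of_mem (mem_Ioi.mpr hy), exponentialPDF_of_nonneg hy.le,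
        ← ENNReal.ofReal_mul (by positivity)]
      norm_num
      ring_nf
    · rw [indicator_of_notMem (notMem_Ioi.mpr hy), ENNReal.ofReal_of_nonpos hy, mul_zero]
  rw [expMeasure, gammaMeasure, lintegral_withDensity_eq_lintegral_mul (f := gammaPDF 1 r) _
      (measurable_gammaPDFReal 1 r).ennreal_ofReal ENNReal.measurable_ofReal]
  change ∫⁻ y, exponentialPDF r y * ENNReal.ofReal y = _
  rw [lintegral_congr hpdf, lintegral_indicator measurableSet_Ioi,
    ← ofReal_integral_eq_lintegral_ofReal, integral_const_mul,
    Real.integral_rpow_mul_exp_neg_mul_Ioi two_pos hr]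
  · norm_num [Real.Gamma_two]
    field_simp
  · refine (Integrable.of_integral_ne_zero ?_).const_mul r
    rw [Real.integral_rpow_mul_exp_neg_mul_Ioi two_pos hr]
    positivity
  · filter_upwards [ae_restrict_mem measurableSet_Ioi] with y hy
    exact mul_nonneg hr.le (mul_nonneg (Real.rpow_nonneg (le_of_lt hy) _) (Real.exp_pos _).le)

lemma measure_lt_mul_le_of_expMeasure {Ω : Type*} [MeasurableSpace Ω] {P : Measure Ω}
    [IsProbabilityMeasure P] {X Y : Ω → ℝ} (hX : Measurable X) (hY : Measurable Y)
    (hXY : IndepFun X Y P) {r s : ℝ} (hr : 0 < r) (hs : 0 < s)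
    (hXlaw : P.map X = expMeasure r) (hYlaw : P.map Y = expMeasure s) {c : ℝ} (hc : 0 ≤ c) :
    P {ω | X ω < c * Y ω} ≤ ENNReal.ofReal (r * c / s) := by
  have := isProbabilityMeasure_expMeasure hr
  have := isProbabilityMeasure_expMeasure hs
  have hmeas : MeasurableSet {p : ℝ × ℝ | p.1 < c * p.2} :=
    measurableSet_lt measurable_fst (measurable_snd.const_mul c)
  calc P {ω | X ω < c * Y ω}
      = (expMeasure r).prod (expMeasure s) {p : ℝ × ℝ | p.1 < c * p.2} := by
        rw [← hXlaw, ← hYlaw, ← (indepFun_iff_map_prod_eq_prod_map_map hX.aemeasurable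
          hY.aemeasurable).mp hXY, Measure.map_apply (hX.prodMk hY) hmeas]
        rfl
    _ = ∫⁻ y, expMeasure r (Iio (c * y)) ∂expMeasure s := Measure.prod_apply_symm hmeas
    _ ≤ ∫⁻ y, ENNReal.ofReal (r * c) * ENNReal.ofReal y ∂expMeasure s := by
        refine lintegral_mono fun y => ?_
        rw [← ENNReal.ofReal_mul (by positivity), mul_assoc]
        exact expMeasure_Iio_le hr _
    _ = ENNReal.ofReal (r * c / s) := by
        rw [lintegral_const_mul _ ENNReal.measurable_ofReal, lintegral_ofReal_expMeasure hs,
          ← ENNReal.ofReal_mul (by positivity), div_eq_mul_inv]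

lemma tendsto_mul_log_add_one_mul_rpow_neg (σ : ℝ) {ε : ℝ} (hε : 0 < ε) :
    Tendsto (fun x : ℝ => (σ * Real.log x + 1) * x ^ (-ε)) atTop (𝓝 0) := by
  have hlog := (isLittleO_log_rpow_atTop hε).tendsto_div_nhds_zero
  have hsum := (hlog.const_mul σ).add (tendsto_rpow_neg_atTop hε)
  rw [mul_zero, add_zero] at hsum
  refine hsum.congr' ?_
  filter_upwards [eventually_gt_atTop 0] with x hx
  rw [Real.rpow_neg hx.le]
  ring

lemma sum_range_pow_le {q : ℝ} (hq : 0 ≤ q) (N : ℕ) :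
    ∑ m ∈ Finset.range (N + 1), q ^ m ≤ (N + 1) * max 1 q ^ N :=
  calc ∑ m ∈ Finset.range (N + 1), q ^ m ≤ ∑ _m ∈ Finset.range (N + 1), max 1 q ^ N :=
        Finset.sum_le_sum fun m hm => (pow_le_pow_left₀ hq (le_max_right 1 q) m).trans
          (pow_le_pow_right₀ (le_max_left 1 q) (Nat.lt_succ_iff.mp (Finset.mem_range.mp hm)))
    _ = (N + 1) * max 1 q ^ N := by simp

lemma tendsto_sum_pow_floor_log_div_rpow {q σ γ : ℝ} (hq : 0 ≤ q) (hσ : 0 ≤ σ)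
    (hγ : 0 < γ) (hσq : σ * Real.log q < γ) :
    Tendsto (fun x : ℝ => (∑ m ∈ Finset.range (⌊σ * Real.log x⌋₊ + 1), q ^ m) / x ^ γ)
      atTop (𝓝 0) := by
  set K := max 1 q
  have hK : 1 ≤ K := le_max_left 1 q
  set β := σ * Real.log K with hβdef
  have hβ : β < γ := by
    rcases le_total q 1 with h | h
    · simpa [β, K, max_eq_left h] using hγ
    · simpa [β, K, max_eq_right h] using hσq
  have hlim := tendsto_mul_log_add_one_mul_rpow_neg σ (sub_pos.mpr hβ)
  rw [neg_sub] at hlim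
  refine squeeze_zero' ?_ ?_ hlim
  · filter_upwards [eventually_ge_atTop 0] with x hx
    positivity
  filter_upwards [eventually_ge_atTop 1] with x hx
  have hx0 : 0 < x := one_pos.trans_le hx
  have hlogx : 0 ≤ σ * Real.log x := mul_nonneg hσ (Real.log_nonneg hx)
  set N := ⌊σ * Real.log x⌋₊
  have hKN : K ^ N ≤ x ^ β := by
    calc K ^ N = K ^ (N : ℝ) := (Real.rpow_natCast K N).symm
      _ ≤ K ^ (σ * Real.log x) := Real.rpow_le_rpow_of_exponent_le hK (Nat.floor_le hlogx)
      _ = x ^ β := by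
        rw [Real.rpow_def_of_pos (one_pos.trans_le hK), Real.rpow_def_of_pos hx0, hβdef]
        ring_nf
  rw [Real.rpow_sub hx0, ← mul_div_assoc]
  gcongr
  exact (sum_range_pow_le hq N).trans (mul_le_mul (by linarith [Nat.floor_le hlogx]) hKN
    (pow_nonneg (zero_le_one.trans hK) N) (by linarith))

lemma update_succ_eq_add_single {ι : Type*} [DecidableEq ι] (x : ι → ℕ) (j : ι) :
    Function.update x j (x j + 1) = x + Pi.single j 1 := by
  ext k
  by_cases hk : k = j <;> simp [hk]

section LatticePath

variable {d m : ℕ}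

def pathPos (J : Fin m → Fin d) (t : ℕ) : Fin d → ℕ :=
  ∑ i : Fin m, if (i : ℕ) < t then Pi.single (J i) 1 else 0

lemma pathPos_zero (J : Fin m → Fin d) : pathPos J 0 = 0 := by
  simp [pathPos]

lemma pathPos_snoc_of_le (J : Fin m → Fin d) (j : Fin d) {t : ℕ} (ht : t ≤ m) :
    pathPos (Fin.snoc J j : Fin (m + 1) → Fin d) t = pathPos J t := by
  simp [pathPos, Fin.sum_univ_castSucc, ht.not_gt]

lemma pathPos_snoc_succ (J : Fin m → Fin d) (j : Fin d) :
    pathPos (Fin.snoc J j : Fin (m + 1) → Fin d) (m + 1) = pathPos J m + Pi.single j 1 := by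
  simp [pathPos, Fin.sum_univ_castSucc]

lemma sum_pathPos (J : Fin m → Fin d) (t : ℕ) : ∑ k, pathPos J t k = min m t := by
  simp only [pathPos, Finset.sum_apply]
  rw [Finset.sum_comm, ← Fin.card_filter_val_lt, Finset.card_filter]
  refine Finset.sum_congr rfl fun i _ => ?_
  split_ifs <;> simp

lemma pathPos_injective (J : Fin m → Fin d) : Function.Injective fun i : Fin m => pathPos J i :=
  fun i₁ i₂ h => by
    have := congrArg (fun x => ∑ k, x k) h
    simp only [sum_pathPos] at this
    omega

end LatticePath

/-- With `c = λM²/d` this is the event that the path `J` is open when every weight is replaced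
by the bound `M`. -/
def openPathEvent {Ω : Type} {d m : ℕ} (c : ℝ) (Y : (Fin d → ℕ) → Ω → ℝ)
    (U : (Fin d → ℕ) → Fin d → Ω → ℝ) (J : Fin m → Fin d) : Set Ω :=
  ⋂ i : Fin m, {ω | U (pathPos J i) (J i) ω < c * Y (pathPos J i) ω}

section Domination

variable {Ω : Type} {lam M : ℝ} {d : ℕ} {w Y : (Fin d → ℕ) → Ω → ℝ}
  {U : (Fin d → ℕ) → Fin d → Ω → ℝ} {ω : Ω}

lemma openEdge.exists_clock_lt (hlam : 0 ≤ lam) (hw : ∀ x, w x ω ∈ Icc 0 M)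
    (hY : ∀ x, 0 ≤ Y x ω) {x y : Fin d → ℕ} (h : openEdge lam d w Y U ω x y) :
    ∃ j, y = x + Pi.single j 1 ∧ U x j ω < lam / d * M ^ 2 * Y x ω := by
  obtain ⟨j, rfl, hU⟩ := h
  refine ⟨j, update_succ_eq_add_single x j, hU.trans_le ?_⟩
  have hww : w x ω * w (Function.update x j (x j + 1)) ω ≤ M ^ 2 := by
    rw [sq]
    exact mul_le_mul (hw x).2 (hw _).2 (hw _).1 ((hw x).1.trans (hw x).2)
  gcongr
  exact hY x

lemma VSet_subset_image_pathPos (hlam : 0 ≤ lam) (hw : ∀ x, w x ω ∈ Icc 0 M)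
    (hY : ∀ x, 0 ≤ Y x ω) (m : ℕ) :
    VSet lam d w Y U ω m ⊆
      (fun J : Fin m → Fin d => pathPos J m) ''
        {J | ω ∈ openPathEvent (lam / d * M ^ 2) Y U J} := by
  induction m with
  | zero =>
    rintro y rfl
    exact ⟨Fin.elim0, by simp [openPathEvent], pathPos_zero _⟩
  | succ m ih =>
    rintro y ⟨x, hx, hxy⟩
    obtain ⟨J, hJ, rfl⟩ := ih hx
    obtain ⟨j, rfl, hU⟩ := hxy.exists_clock_lt hlam hw hY
    refine ⟨Fin.snoc J j, ?_, pathPos_snoc_succ J j⟩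
    simp only [openPathEvent, mem_ofPred_eq, mem_iInter, Fin.forall_fin_succ'] at hJ ⊢
    refine ⟨fun i => ?_, ?_⟩
    · simpa [pathPos_snoc_of_le J j i.isLt.le] using hJ i
    · simpa [pathPos_snoc_of_le J j le_rfl] using hU

lemma ncard_VSet_le_ncard_openPaths (hlam : 0 ≤ lam) (hw : ∀ x, w x ω ∈ Icc 0 M)
    (hY : ∀ x, 0 ≤ Y x ω) (m : ℕ) :
    (VSet lam d w Y U ω m).ncard ≤
      {J : Fin m → Fin d | ω ∈ openPathEvent (lam / d * M ^ 2) Y U J}.ncard :=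
  calc (VSet lam d w Y U ω m).ncard
      ≤ ((fun J : Fin m → Fin d => pathPos J m) ''
          {J | ω ∈ openPathEvent (lam / d * M ^ 2) Y U J}).ncard :=
        ncard_le_ncard (VSet_subset_image_pathPos hlam hw hY m) (toFinite _)
    _ ≤ _ := ncard_image_le (toFinite _)

end Domination

namespace LatticeModel

variable {Ω : Type} [MeasurableSpace Ω] {P : Measure Ω} {μ : Measure ℝ} {lam : ℝ} {d : ℕ}
  (L : LatticeModel P μ lam d)

lemma measurableSet_openPathEvent {m : ℕ} (c : ℝ) (J : Fin m → Fin d) :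
    MeasurableSet (openPathEvent c L.Y L.U J) :=
  .iInter fun _ => measurableSet_lt (L.hU _ _) ((L.hY _).const_mul c)

lemma measure_openPathEvent_le {m : ℕ} (J : Fin m → Fin d) {c : ℝ} (hc : 0 ≤ c) :
    P (openPathEvent c L.Y L.U J) ≤ ENNReal.ofReal c ^ m := by
  have := L.hprob
  have hF : ∀ i, Measurable
      (Sum.elim L.w (Sum.elim L.Y fun p : (Fin d → ℕ) × Fin d => L.U p.1 p.2) i) := by
    rintro (x | x | p)
    exacts [L.hw x, L.hY x, L.hU p.1 p.2]
  -- `a i` and `b i` index the edge clock and the recovery clock read by step `i` of the path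
  let a : Fin m → (Fin d → ℕ) ⊕ (Fin d → ℕ) ⊕ (Fin d → ℕ) × Fin d :=
    fun i => .inr (.inr (pathPos J i, J i))
  let b : Fin m → (Fin d → ℕ) ⊕ (Fin d → ℕ) ⊕ (Fin d → ℕ) × Fin d :=
    fun i => .inr (.inl (pathPos J i))
  have hab : Function.Injective (Sum.elim a b) := by
    rintro (i | i) (k | k) h <;> simp only [a, b, Sum.elim_inl, Sum.elim_inr, Sum.inr.injEq,
      Prod.mk.injEq, reduceCtorEq, Sum.inl.injEq, Sum.inr.injEq] at h ⊢
    exacts [pathPos_injective J h.1, pathPos_injective J h]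
  have hprod := L.hIndep.measure_biInter_preimage_pair hF hab
    (s := fun _ => {p : ℝ × ℝ | p.1 < c * p.2})
    (fun _ => measurableSet_lt measurable_fst (measurable_snd.const_mul c)) Finset.univ
  calc P (openPathEvent c L.Y L.U J)
      = ∏ i : Fin m, P {ω | L.U (pathPos J i) (J i) ω < c * L.Y (pathPos J i) ω} := by
        simpa [openPathEvent, a, b] using hprod
    _ ≤ ∏ _i : Fin m, ENNReal.ofReal c := by
        refine Finset.prod_le_prod' fun i _ => ?_
        simpa using measure_lt_mul_le_of_expMeasure (L.hU _ _) (L.hY _)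
          (L.hIndep.indepFun (hab.ne Sum.inl_ne_inr)) one_pos one_pos (L.hUlaw _ _) (L.hYlaw _) hc
    _ = ENNReal.ofReal c ^ m := by simp

lemma lintegral_sum_indicator_openPathEvent_le (m : ℕ) {c : ℝ} (hc : 0 ≤ c) :
    ∫⁻ ω, ∑ J : Fin m → Fin d, (openPathEvent c L.Y L.U J).indicator 1 ω ∂P ≤
      (d * ENNReal.ofReal c) ^ m := by
  rw [lintegral_finsetSum _
    fun J _ => measurable_one.indicator (L.measurableSet_openPathEvent c J)]
  calc ∑ J : Fin m → Fin d, ∫⁻ ω, (openPathEvent c L.Y L.U J).indicator 1 ω ∂P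
      ≤ ∑ _J : Fin m → Fin d, ENNReal.ofReal c ^ m := by
        refine Finset.sum_le_sum fun J _ => ?_
        rw [lintegral_indicator_one (L.measurableSet_openPathEvent c J)]
        exact L.measure_openPathEvent_le J hc
    _ = (d * ENNReal.ofReal c) ^ m := by simp [mul_pow]

lemma ae_weight_mem_Icc {M : ℝ} (hμM : μ (Icc 0 M) = 1) :
    ∀ᵐ ω ∂P, ∀ x, L.w x ω ∈ Icc 0 M := by
  have := L.hprob
  refine ae_all_iff.mpr fun x => (ae_iff_measure_eq ?_).mpr ?_
  · exact (measurableSet_Icc.preimage (L.hw x)).nullMeasurableSet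
  · change P (L.w x ⁻¹' Icc 0 M) = P univ
    rw [measure_univ, ← Measure.map_apply (L.hw x) measurableSet_Icc, L.hwlaw x, hμM]

lemma ae_recovery_nonneg : ∀ᵐ ω ∂P, ∀ x, 0 ≤ L.Y x ω := by
  refine ae_all_iff.mpr fun x => ae_iff.mpr ?_
  simp only [not_le]
  change P (L.Y x ⁻¹' Iio 0) = 0
  rw [← Measure.map_apply (L.hY x) measurableSet_Iio, L.hYlaw x]
  simpa using expMeasure_Iio_le one_pos 0

lemma measure_sum_ncard_VSet_gt_le (hd : d ≠ 0) (hlam : 0 ≤ lam) {M : ℝ}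
    (hμM : μ (Icc 0 M) = 1) (s : Finset ℕ) {a : ℝ} (ha : 0 < a) :
    P {ω | a < ∑ m ∈ s, ((VSet lam d L.w L.Y L.U ω m).ncard : ℝ)} ≤
      ENNReal.ofReal (∑ m ∈ s, (lam * M ^ 2) ^ m) / ENNReal.ofReal a := by
  classical
  set c := lam / d * M ^ 2
  let N : Ω → ℝ≥0∞ := fun ω =>
    ∑ m ∈ s, ∑ J : Fin m → Fin d, (openPathEvent c L.Y L.U J).indicator 1 ω
  have hN : Measurable N := Finset.measurable_sum _ fun m _ => Finset.measurable_sum _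
    fun J _ => measurable_one.indicator (L.measurableSet_openPathEvent c J)
  have hdom : ∀ᵐ ω ∂P,
      ENNReal.ofReal (∑ m ∈ s, ((VSet lam d L.w L.Y L.U ω m).ncard : ℝ)) ≤ N ω := by
    filter_upwards [L.ae_weight_mem_Icc hμM, L.ae_recovery_nonneg] with ω hw hY
    rw [ENNReal.ofReal_sum_of_nonneg fun m _ => Nat.cast_nonneg _]
    refine Finset.sum_le_sum fun m _ => ?_
    calc ENNReal.ofReal ((VSet lam d L.w L.Y L.U ω m).ncard)
        ≤ {J : Fin m → Fin d | ω ∈ openPathEvent c L.Y L.U J}.ncard := by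
          rw [ENNReal.ofReal_natCast]
          exact_mod_cast ncard_VSet_le_ncard_openPaths hlam hw hY m
      _ = ∑ J : Fin m → Fin d, (openPathEvent c L.Y L.U J).indicator 1 ω := by
          rw [ncard_eq_toFinset_card', toFinset_ofPred, Finset.card_filter]
          push_cast
          simp [indicator_apply]
  have hmean : ∫⁻ ω, N ω ∂P ≤ ENNReal.ofReal (∑ m ∈ s, (lam * M ^ 2) ^ m) := by
    rw [lintegral_finsetSum _ fun m _ => Finset.measurable_sum _
      fun J _ => measurable_one.indicator (L.measurableSet_openPathEvent c J),
      ENNReal.ofReal_sum_of_nonneg fun m _ => by positivity]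
    refine Finset.sum_le_sum fun m _ =>
      (L.lintegral_sum_indicator_openPathEvent_le m (by positivity)).trans_eq ?_
    rw [← ENNReal.ofReal_natCast, ← ENNReal.ofReal_mul (by positivity),
      ← ENNReal.ofReal_pow (by positivity)]
    congr 2
    simp only [c]
    field_simp
  calc P {ω | a < ∑ m ∈ s, ((VSet lam d L.w L.Y L.U ω m).ncard : ℝ)}
      ≤ P {ω | ENNReal.ofReal a ≤ N ω} :=
        measure_mono_ae <| hdom.mono fun ω h hω => (ENNReal.ofReal_le_ofReal hω.le).trans h
    _ ≤ (∫⁻ ω, N ω ∂P) / ENNReal.ofReal a :=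
        meas_ge_le_lintegral_div hN.aemeasurable (ENNReal.ofReal_pos.mpr ha).ne'
          ENNReal.ofReal_ne_top
    _ ≤ _ := by gcongr

end LatticeModel

theorem sum_card_V_small_general (M : ℝ)
    (μ : Measure ℝ)
    (hμM : μ (Set.Icc (0 : ℝ) M) = 1)
    (lam : ℝ) (hlam : 0 < lam)
    (σ : ℝ) (hσ : 0 < σ) (hσ' : σ * Real.log (lam * M ^ 2) < 1 / 10)
    (Ω : ℕ → Type) (mΩ : ∀ d, MeasurableSpace (Ω d))
    (P : ∀ d, @Measure (Ω d) (mΩ d))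
    (L : ∀ d, LatticeModel (P d) μ lam d) :
    Tendsto (fun d : ℕ =>
        ((P d) {ω | (d : ℝ) ^ (0.2 : ℝ) <
          ∑ m ∈ Finset.range (⌊σ * Real.log (d : ℝ)⌋₊ + 1),
            ((VSet lam d (L d).w (L d).Y (L d).U ω m).ncard : ℝ)}).toReal)
      atTop (nhds 0) := by
  have hbound := (tendsto_sum_pow_floor_log_div_rpow (q := lam * M ^ 2) (γ := 0.2)
    (by positivity) hσ.le (by norm_num) (by linarith)).comp tendsto_natCast_atTop_atTop
  refine squeeze_zero' (.of_forall fun d => ENNReal.toReal_nonneg) ?_ hbound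
  filter_upwards [eventually_ne_atTop 0] with d hd
  have hd' : (0 : ℝ) < (d : ℝ) ^ (0.2 : ℝ) := by positivity
  rw [Function.comp_apply]
  refine ENNReal.toReal_le_of_le_ofReal (by positivity) ?_
  rw [ENNReal.ofReal_div_of_pos hd']
  exact (L d).measure_sum_ncard_VSet_gt_le hd hlam.le hμM _ hd'

/-- Fix `σ > 0` with `σ·log(λM²) < 1/10`.  Then
`lim_{d→∞} P_{λ,d}(Σ_{m=0}^{⌊σ log d⌋} |V_m| > d^{0.2}) = 0`, where `|V_m|` denotes the
cardinality of `V_m`. -/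
theorem sum_card_V_small (M : ℝ) (hM : 0 < M)
    (μ : Measure ℝ) [IsProbabilityMeasure μ]
    (hμM : μ (Set.Icc (0 : ℝ) M) = 1) (hμpos : 0 < μ (Set.Ioi (0 : ℝ)))
    (lam : ℝ) (hlam : 0 < lam)
    (σ : ℝ) (hσ : 0 < σ) (hσ' : σ * Real.log (lam * M ^ 2) < 1 / 10)
    (Ω : ℕ → Type) (mΩ : ∀ d, MeasurableSpace (Ω d))
    (P : ∀ d, @Measure (Ω d) (mΩ d))
    (L : ∀ d, LatticeModel (P d) μ lam d) :
    Tendsto (fun d : ℕ =>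
        ((P d) {ω | (d : ℝ) ^ (0.2 : ℝ) <
          ∑ m ∈ Finset.range (⌊σ * Real.log (d : ℝ)⌋₊ + 1),
            ((VSet lam d (L d).w (L d).Y (L d).U ω m).ncard : ℝ)}).toReal)
      atTop (nhds 0) :=
  sum_card_V_small_general M μ hμM lam hlam σ hσ hσ' Ω mΩ P L
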